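/- arXiv:1604.03661 — 9 statements merged into one kernel-verified Lean document; each statement's English description precedes it below -/
import Mathlib

section
/- For every vertex v ∈ V, the up-degree satisfies d⁺_v ≤ μ^{1/(s+1)}. -/
open Finset

/-- For every vertex `v ∈ V`, the up-degree satisfies
`d⁺_v ≤ μ^{1/(s+1)}`, where `d⁺_v = |Γ⁺(v)| = |{u ∈ Γ(v) : v ≺ u}|` and
`μ = ∑_{v ∈ V} d_v^s`. -/
theorem up_degree_le {V : Type*} [Fintype V] [DecidableEq V]
    (G : SimpleGraph V) [DecidableRel G.Adj]
    (s : ℕ) (hs : 1 ≤ s)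
    (prec : V → V → Prop) [DecidableRel prec] [IsStrictTotalOrder V prec]
    (hmono : ∀ u v : V, G.degree u < G.degree v → prec u v)
    (μ : ℝ) (hμ : μ = ∑ v : V, (G.degree v : ℝ) ^ s) :
    ∀ v : V, (((G.neighborFinset v).filter (fun u => prec v u)).card : ℝ) ≤
      μ ^ ((1 : ℝ) / ((s : ℝ) + 1)) := by
  intro v
  set A := (G.neighborFinset v).filter (fun u => prec v u) with hA
  set d : ℕ := A.card with hd
  have hdv : d ≤ G.degree v := by
    rw [hd, ← SimpleGraph.card_neighborFinset_eq_degree]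
    exact Finset.card_filter_le _ _
  have hmem : ∀ u ∈ A, (d : ℝ) ≤ (G.degree u : ℝ) := by
    intro u hu
    rw [hA, Finset.mem_filter] at hu
    have hnot : ¬ G.degree u < G.degree v := fun h => asymm hu.2 (hmono u v h)
    push_neg at hnot
    exact_mod_cast hdv.trans hnot
  have hd0 : (0:ℝ) ≤ (d : ℝ) := Nat.cast_nonneg d
  have hsum : (d : ℝ) ^ (s + 1) ≤ μ := by
    have h1 : A.card • ((d:ℝ) ^ s) ≤ ∑ u ∈ A, (G.degree u : ℝ) ^ s := by
      apply Finset.card_nsmul_le_sum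
      intro u hu
      exact pow_le_pow_left₀ hd0 (hmem u hu) s
    have h2 : ∑ u ∈ A, (G.degree u : ℝ) ^ s ≤ μ := by
      rw [hμ]
      apply Finset.sum_le_sum_of_subset_of_nonneg (Finset.subset_univ A)
      intro i _ _
      positivity
    calc (d:ℝ) ^ (s + 1) = A.card • ((d:ℝ) ^ s) := by
          rw [nsmul_eq_mul, ← hd, pow_succ, mul_comm]
      _ ≤ μ := h1.trans h2
  have hpos : (0:ℝ) ≤ 1 / ((s:ℝ) + 1) := by positivity
  have key := Real.rpow_le_rpow (pow_nonneg hd0 _) hsum hpos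
  have hleft : ((d:ℝ) ^ (s + 1)) ^ ((1:ℝ) / ((s:ℝ) + 1)) = (d:ℝ) := by
    rw [← Real.rpow_natCast (d:ℝ) (s+1), ← Real.rpow_mul hd0]
    have : ((s+1 : ℕ) : ℝ) * (1 / ((s:ℝ) + 1)) = 1 := by
      push_cast
      field_simp
    rw [this, Real.rpow_one]
  rwa [hleft] at key
end

section
/- For every vertex v ∈ V, wt(v) ≤ 4·μ^{s/(s+1)}. -/
/-!
Every upper neighbour `u` of `v` has `d_v ≤ d_u`, so `wt(v) ≤ 2 ∑_{u ∈ Γ⁺(v)} d_u^{s-1}`, and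
there are at most `d_v` such `u`. Split them at the threshold `T = μ^{1/(s+1)}`: if `d_v ≤ T`,
each term is at most `T^{s-1} + d_u^s / T`, giving `d_v T^{s-1} + μ / T ≤ T^s + μ / T`; if
`d_v > T`, every `d_u > T` and each term is at most `d_u^s / T`. Both `T^s` and `μ / T` equal
`μ^{s/(s+1)}`.
-/

open Finset

lemma pow_pred_le_div {x T : ℝ} {s : ℕ} (hs : 1 ≤ s) (hT : 0 < T) (hTx : T ≤ x) :
    x ^ (s - 1) ≤ x ^ s / T := by
  rw [le_div_iff₀ hT]
  have hx : 0 ≤ x := hT.le.trans hTx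
  calc x ^ (s - 1) * T ≤ x ^ (s - 1) * x := by gcongr
    _ = x ^ s := by rw [← pow_succ, Nat.sub_add_cancel hs]

lemma pow_pred_le_add_div {x T : ℝ} {s : ℕ} (hs : 1 ≤ s) (hx : 0 ≤ x) (hT : 0 < T) :
    x ^ (s - 1) ≤ T ^ (s - 1) + x ^ s / T := by
  rcases le_total x T with hxT | hTx
  · have : 0 ≤ x ^ s / T := by positivity
    linarith [pow_le_pow_left₀ hx hxT (s - 1)]
  · have : 0 ≤ T ^ (s - 1) := by positivity
    linarith [pow_pred_le_div hs hT hTx]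

lemma sum_pow_pred_le_pow_add_div {ι : Type*} (S : Finset ι) (f : ι → ℝ) {d T : ℝ} {s : ℕ}
    (hs : 1 ≤ s) (hT : 0 < T) (hcard : #S ≤ d) (hd : ∀ u ∈ S, d ≤ f u) :
    ∑ u ∈ S, f u ^ (s - 1) ≤ T ^ s + (∑ u ∈ S, f u ^ s) / T := by
  have hf : ∀ u ∈ S, 0 ≤ f u := fun u hu => (Nat.cast_nonneg _).trans (hcard.trans (hd u hu))
  rw [sum_div]
  by_cases hdT : d ≤ T
  · calc ∑ u ∈ S, f u ^ (s - 1) ≤ ∑ u ∈ S, (T ^ (s - 1) + f u ^ s / T) :=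
          sum_le_sum fun u hu => pow_pred_le_add_div hs (hf u hu) hT
      _ = #S * T ^ (s - 1) + ∑ u ∈ S, f u ^ s / T := by
          rw [sum_add_distrib, sum_const, nsmul_eq_mul]
      _ ≤ T * T ^ (s - 1) + ∑ u ∈ S, f u ^ s / T := by gcongr; linarith
      _ = T ^ s + ∑ u ∈ S, f u ^ s / T := by rw [← pow_succ', Nat.sub_add_cancel hs]
  · have hsum : ∑ u ∈ S, f u ^ (s - 1) ≤ ∑ u ∈ S, f u ^ s / T :=
      sum_le_sum fun u hu => pow_pred_le_div hs hT (by linarith [hd u hu])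
    linarith [pow_pos hT s]

lemma rpow_inv_succ_pow_add_div {M : ℝ} (hM : 0 < M) (s : ℕ) :
    (M ^ (1 / ((s : ℝ) + 1))) ^ s + M / M ^ (1 / ((s : ℝ) + 1)) =
      2 * M ^ ((s : ℝ) / ((s : ℝ) + 1)) := by
  have hpow : (M ^ (1 / ((s : ℝ) + 1))) ^ s = M ^ ((s : ℝ) / ((s : ℝ) + 1)) := by
    rw [← Real.rpow_natCast, ← Real.rpow_mul hM.le]
    congr 1
    ring
  have hdiv : M / M ^ (1 / ((s : ℝ) + 1)) = M ^ ((s : ℝ) / ((s : ℝ) + 1)) := by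
    rw [show (s : ℝ) / ((s : ℝ) + 1) = 1 - 1 / ((s : ℝ) + 1) by field_simp; ring,
      Real.rpow_sub hM, Real.rpow_one]
  rw [hpow, hdiv]
  ring

theorem sum_pow_pred_le_two_mul_rpow {ι : Type*} (S : Finset ι) (f : ι → ℝ) {d M : ℝ} {s : ℕ}
    (hs : 1 ≤ s) (hcard : #S ≤ d) (hd : ∀ u ∈ S, d ≤ f u) (hM : ∑ u ∈ S, f u ^ s ≤ M) :
    ∑ u ∈ S, f u ^ (s - 1) ≤ 2 * M ^ ((s : ℝ) / ((s : ℝ) + 1)) := by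
  rcases S.eq_empty_or_nonempty with rfl | ⟨w, hw⟩
  · rw [sum_empty] at hM ⊢
    positivity
  have hf : ∀ u ∈ S, 1 ≤ f u := fun u hu => by
    have : (1 : ℝ) ≤ #S := by exact_mod_cast card_pos.2 ⟨w, hw⟩
    linarith [hd u hu]
  have hMpos : 0 < M :=
    calc 0 < f w ^ s := pow_pos (by linarith [hf w hw]) s
      _ ≤ ∑ u ∈ S, f u ^ s :=
          single_le_sum (f := fun u => f u ^ s) (fun u hu => pow_nonneg (by linarith [hf u hu]) s) hw
      _ ≤ M := hM
  set T := M ^ (1 / ((s : ℝ) + 1))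
  calc ∑ u ∈ S, f u ^ (s - 1) ≤ T ^ s + (∑ u ∈ S, f u ^ s) / T :=
        sum_pow_pred_le_pow_add_div S f hs (by positivity) hcard hd
    _ ≤ T ^ s + M / T := by gcongr
    _ = 2 * M ^ ((s : ℝ) / ((s : ℝ) + 1)) := rpow_inv_succ_pow_add_div hMpos s

lemma le_of_rel_of_lt_imp_rel {α β : Type*} [LinearOrder β] {r : α → α → Prop} [Std.Asymm r]
    {f : α → β} (hmono : ∀ a b, f a < f b → r a b) {a b : α} (hab : r a b) : f a ≤ f b :=
  not_lt.1 fun hlt => asymm hab (hmono b a hlt)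

theorem wt_le_general {V : Type*} [Fintype V]
    (G : SimpleGraph V) [DecidableRel G.Adj]
    (s : ℕ) (hs : 1 ≤ s)
    (prec : V → V → Prop) [DecidableRel prec] [IsStrictTotalOrder V prec]
    (hmono : ∀ u v : V, G.degree u < G.degree v → prec u v)
    (μ : ℝ) (hμ : μ = ∑ v : V, (G.degree v : ℝ) ^ s) :
    ∀ v : V, ∑ u ∈ (G.neighborFinset v).filter (fun u => prec v u),
        ((G.degree v : ℝ) ^ (s - 1) + (G.degree u : ℝ) ^ (s - 1)) ≤
      4 * μ ^ ((s : ℝ) / ((s : ℝ) + 1)) := by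
  intro v
  set S := (G.neighborFinset v).filter (fun u => prec v u)
  have hdeg : ∀ u ∈ S, G.degree v ≤ G.degree u := fun u hu =>
    le_of_rel_of_lt_imp_rel hmono (mem_filter.1 hu).2
  have hcard : #S ≤ G.degree v :=
    (card_filter_le _ _).trans (G.card_neighborFinset_eq_degree v).le
  have hsum : ∑ u ∈ S, (G.degree u : ℝ) ^ s ≤ μ :=
    hμ ▸ sum_le_sum_of_subset_of_nonneg (subset_univ S) fun u _ _ => by positivity
  calc ∑ u ∈ S, ((G.degree v : ℝ) ^ (s - 1) + (G.degree u : ℝ) ^ (s - 1))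
      ≤ ∑ u ∈ S, 2 * (G.degree u : ℝ) ^ (s - 1) := sum_le_sum fun u hu => by
        have : (G.degree v : ℝ) ^ (s - 1) ≤ (G.degree u : ℝ) ^ (s - 1) := by
          gcongr; exact_mod_cast hdeg u hu
        linarith
    _ = 2 * ∑ u ∈ S, (G.degree u : ℝ) ^ (s - 1) := (mul_sum _ _ _).symm
    _ ≤ 2 * (2 * μ ^ ((s : ℝ) / ((s : ℝ) + 1))) := by
        gcongr
        exact sum_pow_pred_le_two_mul_rpow S _ (d := G.degree v) hs (by exact_mod_cast hcard)
          (fun u hu => by exact_mod_cast hdeg u hu) hsum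
    _ = 4 * μ ^ ((s : ℝ) / ((s : ℝ) + 1)) := by ring

/-- For every vertex `v ∈ V`, `wt(v) ≤ 4·μ^{s/(s+1)}`, where
`wt(v) = ∑_{u ∈ Γ⁺(v)} (d_v^{s-1} + d_u^{s-1})` and `μ = ∑_{v ∈ V} d_v^s`. -/
theorem wt_le {V : Type*} [Fintype V] [DecidableEq V]
    (G : SimpleGraph V) [DecidableRel G.Adj]
    (s : ℕ) (hs : 1 ≤ s)
    (prec : V → V → Prop) [DecidableRel prec] [IsStrictTotalOrder V prec]
    (hmono : ∀ u v : V, G.degree u < G.degree v → prec u v)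
    (μ : ℝ) (hμ : μ = ∑ v : V, (G.degree v : ℝ) ^ s) :
    ∀ v : V, ∑ u ∈ (G.neighborFinset v).filter (fun u => prec v u),
        ((G.degree v : ℝ) ^ (s - 1) + (G.degree u : ℝ) ^ (s - 1)) ≤
      4 * μ ^ ((s : ℝ) / ((s : ℝ) + 1)) :=
  wt_le_general G s hs prec hmono μ hμ
end

section
/- The sum of the squared vertex weights satisfies ∑_{v∈V} wt(v)^2 ≤ 4·μ^{2 − 1/(s+1)}. -/
/-!
Write `S(v) = ∑_{u ∈ Γ⁺(v)} d_u^{s-1}`. Since `≺` refines the degree order, `d_v ≤ d_u` on `Γ⁺(v)`,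
so `wt(v) ≤ 2 S(v)` and `S(v) d_v ≤ μ`; Hölder together with `|Γ⁺(v)| ≤ d_v` gives
`S(v)^s ≤ d_v μ^{s-1}`, and multiplying the two bounds, `S(v)^{s+1} ≤ μ^s`. Every `u` occurs in at
most `d_u` of the sums `S(v)`, so `∑_v S(v) ≤ μ`, whence
`∑_v wt(v)^2 ≤ 4 max_v S(v) ∑_v S(v) ≤ 4 μ^{s/(s+1)} μ`.
-/
open Finset

theorem Finset.sum_pow_pow_succ_le_card_mul_sum_pow_succ_pow {ι : Type*} (A : Finset ι)
    {x : ι → ℝ} (hx : ∀ i ∈ A, 0 ≤ x i) (n : ℕ) :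
    (∑ i ∈ A, x i ^ n) ^ (n + 1) ≤ #A * (∑ i ∈ A, x i ^ (n + 1)) ^ n := by
  rcases n.eq_zero_or_pos with rfl | hn
  · simp
  have hn' : (0 : ℝ) < n := by exact_mod_cast hn
  have hpq : Real.HolderConjugate (((n : ℝ) + 1) / n) ((n : ℝ) + 1) :=
    .symm <| (Real.holderConjugate_iff_eq_conjExponent (by linarith)).mpr
      (by rw [add_sub_cancel_right])
  have holder := Real.inner_le_Lp_mul_Lq_of_nonneg A hpq (f := fun i => x i ^ n) (g := fun _ => 1)
    (fun i hi => pow_nonneg (hx i hi) n) (fun _ _ => zero_le_one)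
  have hT : ∑ i ∈ A, (x i ^ n) ^ (((n : ℝ) + 1) / n) = ∑ i ∈ A, x i ^ (n + 1) := by
    refine sum_congr rfl fun i hi => ?_
    rw [← Real.rpow_natCast, ← Real.rpow_mul (hx i hi), mul_div_cancel₀ _ hn'.ne']
    exact_mod_cast Real.rpow_natCast (x i) (n + 1)
  simp only [mul_one, Real.one_rpow, sum_const, nsmul_eq_mul, hT] at holder
  have hT0 : 0 ≤ ∑ i ∈ A, x i ^ (n + 1) := sum_nonneg fun i hi => pow_nonneg (hx i hi) _
  calc (∑ i ∈ A, x i ^ n) ^ (n + 1)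
      ≤ ((∑ i ∈ A, x i ^ (n + 1)) ^ (1 / (((n : ℝ) + 1) / n)) * (#A : ℝ) ^ (1 / ((n : ℝ) + 1)))
          ^ (n + 1) :=
        pow_le_pow_left₀ (sum_nonneg fun i hi => pow_nonneg (hx i hi) n) holder _
    _ = #A * (∑ i ∈ A, x i ^ (n + 1)) ^ n := by
        rw [mul_pow, ← Real.rpow_mul_natCast hT0, ← Real.rpow_mul_natCast (Nat.cast_nonneg _)]
        push_cast
        rw [mul_comm]
        congr 1
        · field_simp; simp
        · rw [← Real.rpow_natCast]; congr 1; field_simp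

theorem Real.le_rpow_div_of_pow_le {a b : ℝ} (hb : 0 ≤ b) {m k : ℕ} (hk : k ≠ 0)
    (h : a ^ k ≤ b ^ m) : a ≤ b ^ ((m : ℝ) / k) := by
  rcases le_or_gt a 0 with ha | ha
  · exact ha.trans (Real.rpow_nonneg hb _)
  rw [div_eq_mul_inv, Real.rpow_mul hb, Real.rpow_natCast,
    ← Real.pow_rpow_inv_natCast ha.le hk]
  gcongr

namespace SimpleGraph

variable {V : Type*} [Fintype V] (G : SimpleGraph V) [DecidableRel G.Adj]

def degreeMoment (s : ℕ) : ℝ := ∑ v, (G.degree v : ℝ) ^ s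

theorem degreeMoment_nonneg (s : ℕ) : 0 ≤ G.degreeMoment s := by
  unfold degreeMoment
  positivity

def upNeighborFinset (prec : V → V → Prop) [DecidableRel prec] (v : V) : Finset V :=
  (G.neighborFinset v).filter (prec v)

theorem sum_sum_neighborFinset {M : Type*} [AddCommMonoid M] (f : V → M) :
    ∑ v, ∑ u ∈ G.neighborFinset v, f u = ∑ u, G.degree u • f u := by
  rw [sum_comm' (t' := univ) (s' := fun u => G.neighborFinset u) (by simp [G.adj_comm])]
  simp [← card_neighborFinset_eq_degree]

variable {G} (prec : V → V → Prop) [DecidableRel prec]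

theorem card_upNeighborFinset_le_degree (v : V) : #(G.upNeighborFinset prec v) ≤ G.degree v :=
  G.card_neighborFinset_eq_degree v ▸ card_filter_le _ _

theorem degree_le_of_mem_upNeighborFinset [Std.Asymm prec]
    (hmono : ∀ u v, G.degree u < G.degree v → prec u v) {u v : V}
    (hu : u ∈ G.upNeighborFinset prec v) : G.degree v ≤ G.degree u :=
  not_lt.mp fun h => asymm (mem_filter.mp hu).2 (hmono u v h)

theorem sum_upNeighborFinset_pow_le_degreeMoment (s : ℕ) (v : V) :
    ∑ u ∈ G.upNeighborFinset prec v, (G.degree u : ℝ) ^ s ≤ G.degreeMoment s :=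
  sum_le_sum_of_subset_of_nonneg (subset_univ _) fun _ _ _ => by positivity

theorem sum_sum_upNeighborFinset_pow_le_degreeMoment (n : ℕ) :
    ∑ v, ∑ u ∈ G.upNeighborFinset prec v, (G.degree u : ℝ) ^ n ≤ G.degreeMoment (n + 1) :=
  calc ∑ v, ∑ u ∈ G.upNeighborFinset prec v, (G.degree u : ℝ) ^ n
      ≤ ∑ v, ∑ u ∈ G.neighborFinset v, (G.degree u : ℝ) ^ n :=
        sum_le_sum fun v _ =>
          sum_le_sum_of_subset_of_nonneg (filter_subset _ _) fun _ _ _ => by positivity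
    _ = G.degreeMoment (n + 1) := by
        simp only [sum_sum_neighborFinset, nsmul_eq_mul, degreeMoment, pow_succ']

variable [Std.Asymm prec]

theorem sum_upNeighborFinset_pow_mul_degree_le
    (hmono : ∀ u v, G.degree u < G.degree v → prec u v) (n : ℕ) (v : V) :
    (∑ u ∈ G.upNeighborFinset prec v, (G.degree u : ℝ) ^ n) * G.degree v ≤
      ∑ u ∈ G.upNeighborFinset prec v, (G.degree u : ℝ) ^ (n + 1) := by
  rw [sum_mul]
  gcongr with u hu
  rw [pow_succ]
  gcongr
  exact_mod_cast degree_le_of_mem_upNeighborFinset prec hmono hu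

theorem sum_upNeighborFinset_pow_pow_le_degreeMoment_pow
    (hmono : ∀ u v, G.degree u < G.degree v → prec u v) (n : ℕ) (v : V) :
    (∑ u ∈ G.upNeighborFinset prec v, (G.degree u : ℝ) ^ n) ^ (n + 2) ≤
      G.degreeMoment (n + 1) ^ (n + 1) := by
  set S := ∑ u ∈ G.upNeighborFinset prec v, (G.degree u : ℝ) ^ n
  set T := ∑ u ∈ G.upNeighborFinset prec v, (G.degree u : ℝ) ^ (n + 1)
  have hS : 0 ≤ S := by positivity
  have hT : T ≤ G.degreeMoment (n + 1) := sum_upNeighborFinset_pow_le_degreeMoment prec _ v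
  have holder : S ^ (n + 1) ≤ G.degree v * T ^ n := by
    refine (sum_pow_pow_succ_le_card_mul_sum_pow_succ_pow _ (fun _ _ => by positivity) n).trans ?_
    gcongr
    exact_mod_cast card_upNeighborFinset_le_degree prec v
  calc S ^ (n + 2) = S ^ (n + 1) * S := pow_succ _ _
    _ ≤ G.degree v * T ^ n * S := by gcongr
    _ = S * G.degree v * T ^ n := by ring
    _ ≤ T * T ^ n := by gcongr; exact sum_upNeighborFinset_pow_mul_degree_le prec hmono n v
    _ ≤ G.degreeMoment (n + 1) ^ (n + 1) := by rw [← pow_succ']; gcongr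

theorem sum_upNeighborFinset_pow_le_degreeMoment_rpow
    (hmono : ∀ u v, G.degree u < G.degree v → prec u v) (n : ℕ) (v : V) :
    ∑ u ∈ G.upNeighborFinset prec v, (G.degree u : ℝ) ^ n ≤
      G.degreeMoment (n + 1) ^ (((n : ℝ) + 1) / (n + 2)) := by
  have := Real.le_rpow_div_of_pow_le (G.degreeMoment_nonneg _) (by omega)
    (sum_upNeighborFinset_pow_pow_le_degreeMoment_pow prec hmono n v)
  exact_mod_cast this

theorem sum_upNeighborFinset_pow_add_pow_le_two_mul
    (hmono : ∀ u v, G.degree u < G.degree v → prec u v) (n : ℕ) (v : V) :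
    ∑ u ∈ G.upNeighborFinset prec v, ((G.degree v : ℝ) ^ n + (G.degree u : ℝ) ^ n) ≤
      2 * ∑ u ∈ G.upNeighborFinset prec v, (G.degree u : ℝ) ^ n := by
  rw [mul_sum]
  gcongr with u hu
  have : (G.degree v : ℝ) ≤ G.degree u := by
    exact_mod_cast degree_le_of_mem_upNeighborFinset prec hmono hu
  linarith [pow_le_pow_left₀ (Nat.cast_nonneg _) this n]

end SimpleGraph

theorem sum_wt_sq_le_general {V : Type*} [Fintype V]
    (G : SimpleGraph V) [DecidableRel G.Adj]
    (s : ℕ) (hs : 1 ≤ s)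
    (prec : V → V → Prop) [DecidableRel prec] [IsStrictTotalOrder V prec]
    (hmono : ∀ u v : V, G.degree u < G.degree v → prec u v)
    (μ : ℝ) (hμ : μ = ∑ v : V, (G.degree v : ℝ) ^ s) :
    ∑ v : V, (∑ u ∈ (G.neighborFinset v).filter (fun u => prec v u),
        ((G.degree v : ℝ) ^ (s - 1) + (G.degree u : ℝ) ^ (s - 1))) ^ 2 ≤
      4 * μ ^ ((2 : ℝ) - 1 / ((s : ℝ) + 1)) := by
  obtain ⟨n, rfl⟩ := Nat.exists_eq_add_of_le' hs
  change μ = G.degreeMoment (n + 1) at hμ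
  subst hμ
  set S := fun v => ∑ u ∈ G.upNeighborFinset prec v, (G.degree u : ℝ) ^ n
  calc ∑ v, (∑ u ∈ G.upNeighborFinset prec v, ((G.degree v : ℝ) ^ n + (G.degree u : ℝ) ^ n)) ^ 2
      ≤ ∑ v, (2 * S v) ^ 2 := by
        gcongr with v
        exact G.sum_upNeighborFinset_pow_add_pow_le_two_mul prec hmono n v
    _ = 4 * ∑ v, S v * S v := by simp only [mul_sum]; congr! 1; ring
    _ ≤ 4 * ∑ v, G.degreeMoment (n + 1) ^ (((n : ℝ) + 1) / (n + 2)) * S v := by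
        gcongr with v
        exact G.sum_upNeighborFinset_pow_le_degreeMoment_rpow prec hmono n v
    _ ≤ 4 * (G.degreeMoment (n + 1) ^ (((n : ℝ) + 1) / (n + 2)) * G.degreeMoment (n + 1)) := by
        rw [← mul_sum]
        gcongr 4 * ?_
        exact mul_le_mul_of_nonneg_left (G.sum_sum_upNeighborFinset_pow_le_degreeMoment prec n)
          (Real.rpow_nonneg (G.degreeMoment_nonneg _) _)
    _ = 4 * G.degreeMoment (n + 1) ^ ((2 : ℝ) - 1 / (((n + 1 : ℕ) : ℝ) + 1)) := by
        rw [← Real.rpow_add_one' (G.degreeMoment_nonneg _) (by positivity)]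
        congr 2
        push_cast
        field_simp
        ring

/-- The sum of the squared vertex weights satisfies
`∑_{v ∈ V} wt(v)^2 ≤ 4·μ^{2 − 1/(s+1)}`, where
`wt(v) = ∑_{u ∈ Γ⁺(v)} (d_v^{s-1} + d_u^{s-1})` and `μ = ∑_{v ∈ V} d_v^s`. -/
theorem sum_wt_sq_le {V : Type*} [Fintype V] [DecidableEq V]
    (G : SimpleGraph V) [DecidableRel G.Adj]
    (s : ℕ) (hs : 1 ≤ s)
    (prec : V → V → Prop) [DecidableRel prec] [IsStrictTotalOrder V prec]
    (hmono : ∀ u v : V, G.degree u < G.degree v → prec u v)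
    (μ : ℝ) (hμ : μ = ∑ v : V, (G.degree v : ℝ) ^ s) :
    ∑ v : V, (∑ u ∈ (G.neighborFinset v).filter (fun u => prec v u),
        ((G.degree v : ℝ) ^ (s - 1) + (G.degree u : ℝ) ^ (s - 1))) ^ 2 ≤
      4 * μ ^ ((2 : ℝ) - 1 / ((s : ℝ) + 1)) :=
  sum_wt_sq_le_general G s hs prec hmono μ hμ
end

section
/- If G has at least one edge, then min{ n^{1 − 1/s}, n^{s − 1/s} / μ^{1 − 1/s} } ≥ 2m · μ_{2s−1} / μ^2, where μ_{2s−1} = ∑_{v∈V} d_v^{2s−1}. -/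
/-!
Three inequalities on the degrees: the power-mean inequality `2m = ∑ d_v ≤ n^{1-1/s} μ^{1/s}`,
and, writing `d_v^{2s-1} = d_v^{s-1} d_v^s` and bounding `d_v^{s-1}` either by `μ^{1-1/s}`
(since `d_v^s ≤ μ`) or by `n^{s-1}` (since `d_v < n`), the bounds `μ_{2s-1} ≤ μ^{1-1/s} μ` and
`μ_{2s-1} ≤ n^{s-1} μ`. Multiplying the first by each of the other two gives
`2m μ_{2s-1} ≤ n^{1-1/s} μ^2` and `2m μ_{2s-1} μ^{1-1/s} ≤ n^{s-1/s} μ^2`.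
-/

open Finset

namespace Real

theorem rpow_mul_rpow_one_sub {x : ℝ} (hx : 0 ≤ x) (a : ℝ) : x ^ a * x ^ (1 - a) = x := by
  rw [← rpow_add' hx (by norm_num), add_sub_cancel, rpow_one]

variable {ι : Type*} (s : Finset ι) {f : ι → ℝ} {p : ℝ}

theorem sum_rpow_two_mul_sub_one_le (hf : ∀ i ∈ s, 0 ≤ f i) (hp : 1 ≤ p) {C : ℝ}
    (hC : ∀ i ∈ s, f i ^ (p - 1) ≤ C) :
    ∑ i ∈ s, f i ^ (2 * p - 1) ≤ C * ∑ i ∈ s, f i ^ p := by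
  rw [mul_sum]
  refine sum_le_sum fun i hi => ?_
  rw [show 2 * p - 1 = (p - 1) + p by ring, rpow_add' (hf i hi) (by linarith)]
  exact mul_le_mul_of_nonneg_right (hC i hi) (rpow_nonneg (hf i hi) p)

theorem rpow_sub_one_le_sum_rpow_rpow (hf : ∀ i ∈ s, 0 ≤ f i) (hp : 1 ≤ p) {i : ι}
    (hi : i ∈ s) : f i ^ (p - 1) ≤ (∑ j ∈ s, f j ^ p) ^ (1 - 1 / p) := by
  have hp₀ : p ≠ 0 := by positivity
  calc f i ^ (p - 1) = (f i ^ p) ^ (1 - 1 / p) := by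
        rw [← rpow_mul (hf i hi)]; congr 1; field_simp
    _ ≤ (∑ j ∈ s, f j ^ p) ^ (1 - 1 / p) := by
        refine rpow_le_rpow (rpow_nonneg (hf i hi) p) ?_ ?_
        · exact single_le_sum (fun j hj => rpow_nonneg (hf j hj) p) hi
        · rw [sub_nonneg, div_le_one (by positivity)]; exact hp

theorem sum_le_card_rpow_mul_sum_rpow_rpow (hf : ∀ i ∈ s, 0 ≤ f i) (hp : 1 ≤ p) :
    ∑ i ∈ s, f i ≤ (#s : ℝ) ^ (1 - 1 / p) * (∑ i ∈ s, f i ^ p) ^ (1 / p) := by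
  have hp₀ : p ≠ 0 := by positivity
  have hsum : 0 ≤ ∑ i ∈ s, f i := sum_nonneg hf
  calc ∑ i ∈ s, f i = ((∑ i ∈ s, f i) ^ p) ^ (1 / p) := by
        rw [← rpow_mul hsum, mul_one_div_cancel hp₀, rpow_one]
    _ ≤ ((#s : ℝ) ^ (p - 1) * ∑ i ∈ s, f i ^ p) ^ (1 / p) :=
        rpow_le_rpow (rpow_nonneg hsum p)
          (rpow_sum_le_const_mul_sum_rpow_of_nonneg s hp hf) (by positivity)
    _ = (#s : ℝ) ^ (1 - 1 / p) * (∑ i ∈ s, f i ^ p) ^ (1 / p) := by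
        rw [mul_rpow (by positivity) (sum_nonneg fun i hi => rpow_nonneg (hf i hi) p),
          ← rpow_mul (by positivity)]
        congr 2; field_simp

end Real

namespace SimpleGraph

variable {V : Type*} [Fintype V] (G : SimpleGraph V) [DecidableRel G.Adj] {p : ℝ}

theorem two_mul_card_edgeFinset_le (hp : 1 ≤ p) :
    2 * (#G.edgeFinset : ℝ) ≤
      (Fintype.card V : ℝ) ^ (1 - 1 / p) * (∑ v, (G.degree v : ℝ) ^ p) ^ (1 / p) := by
  have handshake : ∑ v, (G.degree v : ℝ) = 2 * #G.edgeFinset := by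
    exact_mod_cast G.sum_degrees_eq_twice_card_edges
  simpa [handshake] using
    Real.sum_le_card_rpow_mul_sum_rpow_rpow univ (fun v _ => Nat.cast_nonneg (G.degree v)) hp

theorem sum_degree_rpow_two_mul_sub_one_le (hp : 1 ≤ p) :
    ∑ v, (G.degree v : ℝ) ^ (2 * p - 1) ≤
      (∑ v, (G.degree v : ℝ) ^ p) ^ (1 - 1 / p) * ∑ v, (G.degree v : ℝ) ^ p :=
  have hd : ∀ v ∈ univ, (0 : ℝ) ≤ G.degree v := fun _ _ => Nat.cast_nonneg _
  Real.sum_rpow_two_mul_sub_one_le univ hd hp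
    fun _ hv => Real.rpow_sub_one_le_sum_rpow_rpow univ hd hp hv

theorem sum_degree_rpow_two_mul_sub_one_le_card (hp : 1 ≤ p) :
    ∑ v, (G.degree v : ℝ) ^ (2 * p - 1) ≤
      (Fintype.card V : ℝ) ^ (p - 1) * ∑ v, (G.degree v : ℝ) ^ p :=
  Real.sum_rpow_two_mul_sub_one_le univ (fun v _ => Nat.cast_nonneg _) hp fun v _ =>
    Real.rpow_le_rpow (Nat.cast_nonneg _) (by exact_mod_cast (G.degree_lt_card_verts v).le)
      (by linarith)

theorem sum_degree_rpow_pos (hG : G.edgeFinset.Nonempty) : 0 < ∑ v, (G.degree v : ℝ) ^ p := by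
  obtain ⟨e, he⟩ := hG
  induction e with
  | h a b =>
    have hda : 0 < G.degree a := (G.degree_pos_iff_exists_adj a).2 ⟨b, by simpa using he⟩
    exact sum_pos' (fun v _ => by positivity) ⟨a, mem_univ a, by positivity⟩

theorem two_mul_card_edgeFinset_mul_sum_degree_rpow_le (hp : 1 ≤ p) :
    2 * (#G.edgeFinset : ℝ) * ∑ v, (G.degree v : ℝ) ^ (2 * p - 1) ≤
      (Fintype.card V : ℝ) ^ (1 - 1 / p) * (∑ v, (G.degree v : ℝ) ^ p) ^ 2 := by
  set μ := ∑ v, (G.degree v : ℝ) ^ p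
  have hμ : 0 ≤ μ := sum_nonneg fun v _ => by positivity
  have hμ_split := Real.rpow_mul_rpow_one_sub hμ (1 / p)
  calc 2 * (#G.edgeFinset : ℝ) * ∑ v, (G.degree v : ℝ) ^ (2 * p - 1)
      ≤ (Fintype.card V : ℝ) ^ (1 - 1 / p) * μ ^ (1 / p) * (μ ^ (1 - 1 / p) * μ) :=
        mul_le_mul (G.two_mul_card_edgeFinset_le hp) (G.sum_degree_rpow_two_mul_sub_one_le hp)
          (sum_nonneg fun v _ => by positivity) (by positivity)
    _ = (Fintype.card V : ℝ) ^ (1 - 1 / p) * μ ^ 2 := by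
        linear_combination (Fintype.card V : ℝ) ^ (1 - 1 / p) * μ * hμ_split

theorem two_mul_card_edgeFinset_mul_sum_degree_rpow_mul_rpow_le (hp : 1 ≤ p) :
    2 * (#G.edgeFinset : ℝ) * (∑ v, (G.degree v : ℝ) ^ (2 * p - 1)) *
        (∑ v, (G.degree v : ℝ) ^ p) ^ (1 - 1 / p) ≤
      (Fintype.card V : ℝ) ^ (p - 1 / p) * (∑ v, (G.degree v : ℝ) ^ p) ^ 2 := by
  set μ := ∑ v, (G.degree v : ℝ) ^ p
  set n : ℝ := (Fintype.card V : ℝ)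
  have hμ : 0 ≤ μ := sum_nonneg fun v _ => by positivity
  have hμ_split := Real.rpow_mul_rpow_one_sub hμ (1 / p)
  have hn_split : n ^ (1 - 1 / p) * n ^ (p - 1) = n ^ (p - 1 / p) := by
    rw [← Real.rpow_add_of_nonneg (by positivity)
      (sub_nonneg.2 (div_le_one_of_le₀ hp (by positivity))) (by linarith)]
    ring_nf
  calc 2 * (#G.edgeFinset : ℝ) * (∑ v, (G.degree v : ℝ) ^ (2 * p - 1)) * μ ^ (1 - 1 / p)
      ≤ n ^ (1 - 1 / p) * μ ^ (1 / p) * (n ^ (p - 1) * μ) * μ ^ (1 - 1 / p) := by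
        refine mul_le_mul_of_nonneg_right ?_ (by positivity)
        exact mul_le_mul (G.two_mul_card_edgeFinset_le hp)
          (G.sum_degree_rpow_two_mul_sub_one_le_card hp)
          (sum_nonneg fun v _ => by positivity) (by positivity)
    _ = n ^ (p - 1 / p) * μ ^ 2 := by
        linear_combination n ^ (1 - 1 / p) * n ^ (p - 1) * μ * hμ_split + μ ^ 2 * hn_split

end SimpleGraph

theorem min_ge_edge_moment_ratio_general {V : Type*} [Fintype V]
    (G : SimpleGraph V) [DecidableRel G.Adj]
    (s : ℕ) (hs : 1 ≤ s)
    (hm : G.edgeFinset.Nonempty)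
    (μ : ℝ) (hμ : μ = ∑ v : V, (G.degree v : ℝ) ^ s)
    (μ' : ℝ) (hμ' : μ' = ∑ v : V, (G.degree v : ℝ) ^ (2 * s - 1)) :
    min ((Fintype.card V : ℝ) ^ ((1 : ℝ) - 1 / (s : ℝ)))
        ((Fintype.card V : ℝ) ^ ((s : ℝ) - 1 / (s : ℝ)) / μ ^ ((1 : ℝ) - 1 / (s : ℝ)))
      ≥ 2 * (G.edgeFinset.card : ℝ) * μ' / μ ^ 2 := by
  have hp : 1 ≤ (s : ℝ) := by exact_mod_cast hs
  replace hμ : μ = ∑ v, (G.degree v : ℝ) ^ (s : ℝ) := by simp only [hμ, Real.rpow_natCast]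
  replace hμ' : μ' = ∑ v, (G.degree v : ℝ) ^ (2 * (s : ℝ) - 1) := by
    simp only [hμ', ← Real.rpow_natCast, Nat.cast_sub (by omega : 1 ≤ 2 * s), Nat.cast_mul,
      Nat.cast_ofNat, Nat.cast_one]
  have hμ_pos : 0 < μ := hμ ▸ G.sum_degree_rpow_pos hm
  rw [ge_iff_le, le_min_iff, div_le_iff₀ (by positivity),
    div_le_div_iff₀ (by positivity) (by positivity), hμ, hμ']
  exact ⟨G.two_mul_card_edgeFinset_mul_sum_degree_rpow_le hp,
    G.two_mul_card_edgeFinset_mul_sum_degree_rpow_mul_rpow_le hp⟩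

/-- If `G` has at least one edge, then
`min{ n^{1 − 1/s}, n^{s − 1/s} / μ^{1 − 1/s} } ≥ 2m·μ_{2s−1}/μ^2`, where
`μ = ∑_{v ∈ V} d_v^s` and `μ_{2s−1} = ∑_{v ∈ V} d_v^{2s−1}`. -/
theorem min_ge_edge_moment_ratio {V : Type*} [Fintype V] [DecidableEq V]
    (G : SimpleGraph V) [DecidableRel G.Adj]
    (s : ℕ) (hs : 1 ≤ s)
    (hm : G.edgeFinset.Nonempty)
    (μ : ℝ) (hμ : μ = ∑ v : V, (G.degree v : ℝ) ^ s)
    (μ' : ℝ) (hμ' : μ' = ∑ v : V, (G.degree v : ℝ) ^ (2 * s - 1)) :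
    min ((Fintype.card V : ℝ) ^ ((1 : ℝ) - 1 / (s : ℝ)))
        ((Fintype.card V : ℝ) ^ ((s : ℝ) - 1 / (s : ℝ)) / μ ^ ((1 : ℝ) - 1 / (s : ℝ)))
      ≥ 2 * (G.edgeFinset.card : ℝ) * μ' / μ ^ 2 :=
  min_ge_edge_moment_ratio_general G s hs hm μ hμ μ' hμ'
end

section
/- For every subset S ⊆ V with |S| ≥ 2, letting E(S) denote the set of edges of G with both endpoints in S, we have ⌈ |E(S)| / (|S|−1) ⌉ ≤ μ^{1/(s+1)}. In particular, the degeneracy-type quantity α(G) = max_{S ⊆ V, |S| ≥ 2} ⌈ |E(S)| / (|S|−1) ⌉ satisfies α(G) ≤ μ^{1/(s+1)}. -/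
/-!
Let `n = |S|` and `k = ⌈|E(S)| / (n - 1)⌉ ≥ 1`, so that `|E(S)| > (k - 1)(n - 1)`. In the subgraph
induced on `S` at least `k` vertices have degree at least `k`: otherwise the fewer than `k`
vertices of large degree have degree at most `n - 1` and all others degree at most `k - 1`,
which gives `2 |E(S)| ≤ 2 (k - 1)(n - 1)`. These `k` vertices alone contribute at least
`k * k ^ s` to `μ`, so `k ^ (s + 1) ≤ μ`.
-/

open Finset

namespace SimpleGraph

variable {W : Type*} [Fintype W] (H : SimpleGraph W) [DecidableRel H.Adj]

theorem le_card_filter_le_degree {k : ℕ}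
    (h : (k - 1) * (Fintype.card W - 1) < #H.edgeFinset) :
    k ≤ #{v | k ≤ H.degree v} := by
  by_contra! hT
  have hn : 2 ≤ Fintype.card W := by
    by_contra! hn
    have := H.card_edgeFinset_le_card_choose_two
    rw [Nat.choose_eq_zero_of_lt hn] at this
    omega
  have hcard := card_filter_add_card_filter_not (s := univ) (k ≤ H.degree ·)
  have hsum : 2 * #H.edgeFinset ≤
      #{v | k ≤ H.degree v} * (Fintype.card W - 1) + #{v | ¬k ≤ H.degree v} * (k - 1) := by
    rw [← H.sum_degrees_eq_twice_card_edges, ← sum_filter_add_sum_filter_not univ (k ≤ H.degree ·)]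
    gcongr
    · simpa using sum_le_card_nsmul _ _ _ fun v _ => Nat.le_sub_one_of_lt (H.degree_lt_card_verts v)
    · simpa using sum_le_card_nsmul _ _ _ fun v hv => Nat.le_sub_one_of_lt (by simpa using hv)
  generalize #{v | k ≤ H.degree v} = t at hT hsum hcard
  generalize #{v | ¬k ≤ H.degree v} = t' at hsum hcard
  rw [card_univ] at hcard
  obtain ⟨a, rfl⟩ : ∃ a, k = a + 1 := ⟨k - 1, by omega⟩
  obtain ⟨b, hb⟩ : ∃ b, Fintype.card W = b + 1 := ⟨Fintype.card W - 1, by omega⟩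
  simp only [hb, Nat.add_sub_cancel] at h hsum hcard hn
  have hbound : t * b + t' * a ≤ 2 * a * b := by
    obtain ⟨d, rfl⟩ : ∃ d, a = t + d := ⟨a - t, by omega⟩
    obtain rfl : t' = b + 1 - t := by omega
    rcases t.eq_zero_or_pos with rfl | ht
    · nlinarith
    · zify [(by omega : t ≤ b + 1)]
      nlinarith
  linarith

theorem pow_succ_le_sum_degree_pow {k : ℕ}
    (h : (k - 1) * (Fintype.card W - 1) < #H.edgeFinset) (s : ℕ) :
    k ^ (s + 1) ≤ ∑ v, H.degree v ^ s :=
  calc k ^ (s + 1) = k * k ^ s := pow_succ' k s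
    _ ≤ #{v | k ≤ H.degree v} * k ^ s := Nat.mul_le_mul_right _ (H.le_card_filter_le_degree h)
    _ ≤ ∑ v with k ≤ H.degree v, H.degree v ^ s := by
      simpa using card_nsmul_le_sum _ _ _ fun v hv => Nat.pow_le_pow_left (mem_filter.1 hv).2 s
    _ ≤ ∑ v, H.degree v ^ s := sum_le_sum_of_subset (filter_subset _ _)

theorem card_edgeFinset_induce [DecidableEq W] (S : Finset W) :
    #(H.induce (S : Set W)).edgeFinset = #{e ∈ H.edgeFinset | ∀ v ∈ e, v ∈ S} := by
  have := congrArg card (H.map_edgeFinset_induce (s := (S : Set W)))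
  rw [card_map] at this
  convert this using 2
  · ext e
    simp
  · ext e
    simp [mem_sym2_iff]

theorem sum_degree_induce_pow_le (S : Finset W) (s : ℕ) :
    ∑ v : (S : Set W), (H.induce (S : Set W)).degree v ^ s ≤ ∑ v, H.degree v ^ s :=
  calc ∑ v : (S : Set W), (H.induce (S : Set W)).degree v ^ s
      ≤ ∑ v : (S : Set W), H.degree v ^ s := by
        gcongr with v
        exact (Embedding.induce (S : Set W)).toCopy.degree_le v
    _ = ∑ v ∈ S, H.degree v ^ s := sum_finset_coe (fun v => H.degree v ^ s) S
    _ ≤ ∑ v, H.degree v ^ s := sum_le_sum_of_subset (subset_univ S)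

end SimpleGraph

theorem Int.ceil_div_sub_one_mul_lt {R : Type*} [Field R] [LinearOrder R] [IsStrictOrderedRing R]
    [FloorRing R] (a : R) {b : R} (hb : 0 < b) : (⌈a / b⌉ - 1) * b < a := by
  rw [← lt_div_iff₀ hb]
  linarith [Int.ceil_lt_add_one (a / b)]

theorem degeneracy_le_moment_root_general {V : Type*} [Fintype V] [DecidableEq V]
    (G : SimpleGraph V) [DecidableRel G.Adj]
    (s : ℕ)
    (μ : ℝ) (hμ : μ = ∑ v : V, (G.degree v : ℝ) ^ s) :
    ∀ S : Finset V, 2 ≤ S.card →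
      ((⌈((G.edgeFinset.filter (fun e => ∀ v ∈ e, v ∈ S)).card : ℚ) /
          ((S.card : ℚ) - 1)⌉ : ℤ) : ℝ) ≤ μ ^ ((1 : ℝ) / ((s : ℝ) + 1)) := by
  intro S hS
  set E := (G.edgeFinset.filter (fun e => ∀ v ∈ e, v ∈ S)).card
  have hμ0 : 0 ≤ μ := hμ ▸ by positivity
  obtain hk | hk := le_or_gt ⌈(E : ℚ) / ((S.card : ℚ) - 1)⌉ 0
  · exact (Int.cast_nonpos.2 hk).trans (by positivity)
  lift ⌈(E : ℚ) / ((S.card : ℚ) - 1)⌉ to ℕ using hk.le with k hk_eq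
  have hdense : (k - 1) * (Fintype.card (S : Set V) - 1) < #(G.induce (S : Set V)).edgeFinset := by
    have := Int.ceil_div_sub_one_mul_lt (E : ℚ)
      (show (0 : ℚ) < S.card - 1 by linarith [(Nat.ofNat_le_cast (α := ℚ)).2 hS])
    rw [← hk_eq] at this
    rw [G.card_edgeFinset_induce, show Fintype.card (S : Set V) = #S from Fintype.card_coe S,
      ← Nat.cast_lt (α := ℚ)]
    push_cast [Nat.cast_sub (by omega : 1 ≤ k), Nat.cast_sub (by omega : 1 ≤ S.card)]
    exact_mod_cast this
  have hpow : (k : ℝ) ^ (s + 1) ≤ μ := by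
    rw [hμ]
    exact_mod_cast ((G.induce (S : Set V)).pow_succ_le_sum_degree_pow hdense s).trans
      (G.sum_degree_induce_pow_le S s)
  rw [Int.cast_natCast, one_div, Real.le_rpow_inv_iff_of_pos (by positivity) hμ0 (by positivity)]
  exact_mod_cast hpow

/-- For every subset `S ⊆ V` with `|S| ≥ 2`, letting `E(S)` be the
set of edges of `G` with both endpoints in `S`, we have
`⌈ |E(S)| / (|S|−1) ⌉ ≤ μ^{1/(s+1)}`; in particular the degeneracy-type
quantity `α(G) = max_S ⌈ |E(S)| / (|S|−1) ⌉` is at most `μ^{1/(s+1)}`. -/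
theorem degeneracy_le_moment_root {V : Type*} [Fintype V] [DecidableEq V]
    (G : SimpleGraph V) [DecidableRel G.Adj]
    (s : ℕ) (hs : 1 ≤ s)
    (μ : ℝ) (hμ : μ = ∑ v : V, (G.degree v : ℝ) ^ s) :
    ∀ S : Finset V, 2 ≤ S.card →
      ((⌈((G.edgeFinset.filter (fun e => ∀ v ∈ e, v ∈ S)).card : ℚ) /
          ((S.card : ℚ) - 1)⌉ : ℤ) : ℝ) ≤ μ ^ ((1 : ℝ) / ((s : ℝ) + 1)) :=
  degeneracy_le_moment_root_general G s μ hμ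
end

section
/- For all integers i ≥ 0 and j ≥ 2: |V_{i,j}| ≤ |Û_{i,j}| and |E⁺(V_{i,j}, Û_{i,j})| ≤ 2·α·|Û_{i,j}|. -/
open Finset

/-- For all integers `i ≥ 0` and `j ≥ 2`:
`|V_{i,j}| ≤ |Û_{i,j}|` and `|E⁺(V_{i,j}, Û_{i,j})| ≤ 2·α·|Û_{i,j}|`,
where `U_i = {u : 2^{i−1} < d_u ≤ 2^i}`, `Γ⁺_i(v) = Γ⁺(v) ∩ U_i`,
`V_{i,j} = {v : 2^{j−1}·α < |Γ⁺_i(v)| ≤ 2^j·α}`,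
`Û_{i,j} = U_i ∩ ⋃_{v ∈ V_{i,j}} Γ⁺(v)`, and
`E⁺(S,T) = {(u,v) : u ∈ S, v ∈ T, v ∈ Γ⁺(u)}`;
`G` has degeneracy at most `α` in the sense that every vertex subset `S`
spans at most `α·|S|` edges. -/
theorem card_Vij_le_and_upEdges_le {V : Type*} [Fintype V] [DecidableEq V]
    (G : SimpleGraph V) [DecidableRel G.Adj]
    (s : ℕ) (hs : 1 ≤ s)
    (prec : V → V → Prop) [DecidableRel prec] [IsStrictTotalOrder V prec]
    (hmono : ∀ u v : V, G.degree u < G.degree v → prec u v)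
    (α : ℝ) (hα : 1 ≤ α)
    (hdeg : ∀ S : Finset V,
      ((G.edgeFinset.filter (fun e => ∀ x ∈ e, x ∈ S)).card : ℝ) ≤ α * S.card)
    (Gp : V → Finset V) (hGp : ∀ v u : V, u ∈ Gp v ↔ G.Adj v u ∧ prec v u)
    (i j : ℕ) (hj : 2 ≤ j)
    (Ui : Finset V)
    (hUi : ∀ u : V, u ∈ Ui ↔
      (2 : ℝ) ^ ((i : ℝ) - 1) < (G.degree u : ℝ) ∧ (G.degree u : ℝ) ≤ 2 ^ i)
    (Vij : Finset V)
    (hVij : ∀ v : V, v ∈ Vij ↔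
      (2 : ℝ) ^ (j - 1) * α < ((Gp v ∩ Ui).card : ℝ) ∧
        ((Gp v ∩ Ui).card : ℝ) ≤ (2 : ℝ) ^ j * α) :
    Vij.card ≤ (Ui ∩ Vij.biUnion Gp).card ∧
      ((((Vij ×ˢ (Ui ∩ Vij.biUnion Gp)).filter
          (fun p => p.2 ∈ Gp p.1)).card : ℝ) ≤
        2 * α * ((Ui ∩ Vij.biUnion Gp).card : ℝ)) := by
  classical
  set U : Finset V := Ui ∩ Vij.biUnion Gp with hU
  set E : Finset (V × V) := (Vij ×ˢ U).filter (fun p => p.2 ∈ Gp p.1) with hE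
  have hsub : ∀ v ∈ Vij, Gp v ∩ Ui ⊆ U := by
    intro v hv u hu
    rcases mem_inter.1 hu with ⟨h1, h2⟩
    exact mem_inter.2 ⟨h2, mem_biUnion.2 ⟨v, hv, h1⟩⟩
  have hfib : ∀ v ∈ Vij, (Gp v ∩ Ui).card ≤ (E.filter (fun p => p.1 = v)).card := by
    intro v hv
    apply Finset.card_le_card_of_injOn (fun u => (v, u))
    · intro u hu
      refine mem_filter.2 ⟨mem_filter.2 ⟨mem_product.2 ⟨hv, hsub v hv hu⟩, ?_⟩, rfl⟩
      exact (mem_inter.1 hu).1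
    · intro a _ b _ h
      exact (Prod.mk.injEq _ _ _ _ ▸ h).2
  have hEcard : E.card = ∑ v ∈ Vij, (E.filter (fun p => p.1 = v)).card := by
    apply Finset.card_eq_sum_card_fiberwise
    intro p hp
    exact (mem_product.1 (mem_filter.1 hp).1).1
  have hElow : ∑ v ∈ Vij, (Gp v ∩ Ui).card ≤ E.card := by
    rw [hEcard]; exact Finset.sum_le_sum hfib
  have hEup : (E.card : ℝ) ≤ α * (Vij.card : ℝ) + α * (U.card : ℝ) := by
    have hinj : E.card ≤ (G.edgeFinset.filter (fun e => ∀ x ∈ e, x ∈ Vij ∪ U)).card := by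
      apply Finset.card_le_card_of_injOn (fun p => s(p.1, p.2))
      · intro p hp
        obtain ⟨hps, hp3⟩ := mem_filter.1 hp
        obtain ⟨hp1, hp2⟩ := mem_product.1 hps
        have hadj := (hGp p.1 p.2).1 hp3
        refine mem_filter.2 ⟨SimpleGraph.mem_edgeFinset.2 hadj.1, ?_⟩
        intro x hx
        rcases Sym2.mem_iff.1 hx with h | h
        · subst h; exact mem_union_left _ hp1
        · subst h; exact mem_union_right _ hp2
      · intro p hp q hq h
        have hpq := ((hGp p.1 p.2).1 (mem_filter.1 hp).2).2
        have hqp := ((hGp q.1 q.2).1 (mem_filter.1 hq).2).2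
        rcases Sym2.eq_iff.1 h with ⟨h1, h2⟩ | ⟨h1, h2⟩
        · exact Prod.ext h1 h2
        · exfalso
          rw [← h2, ← h1] at hqp
          exact irrefl_of prec p.1 (trans_of prec hpq hqp)
    calc (E.card : ℝ) ≤ _ := Nat.cast_le.2 hinj
      _ ≤ α * ((Vij ∪ U).card : ℝ) := hdeg _
      _ ≤ α * ((Vij.card : ℝ) + (U.card : ℝ)) := by
          apply mul_le_mul_of_nonneg_left _ (by linarith)
          exact_mod_cast Finset.card_union_le _ _
      _ = α * (Vij.card : ℝ) + α * (U.card : ℝ) := by ring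
  rcases Vij.eq_empty_or_nonempty with hemp | hne
  · subst hemp
    constructor
    · simp
    · have : E = ∅ := by
        simp [hE]
      rw [this]
      have : (0:ℝ) ≤ 2 * α * ((U.card : ℝ)) := by positivity
      simpa using this
  · have h2a : ∀ v ∈ Vij, 2 * α < ((Gp v ∩ Ui).card : ℝ) := by
      intro v hv
      have h1 := ((hVij v).1 hv).1
      have h2 : (2:ℝ) ≤ (2:ℝ) ^ (j - 1) := by
        calc (2:ℝ) = 2 ^ 1 := (pow_one 2).symm
        _ ≤ 2 ^ (j - 1) := by
            apply pow_le_pow_right₀ (by norm_num)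
            omega
      nlinarith
    have hstrict : 2 * α * (Vij.card : ℝ) < (E.card : ℝ) := by
      have hsum : ∑ v ∈ Vij, (2 * α) < ∑ v ∈ Vij, ((Gp v ∩ Ui).card : ℝ) :=
        Finset.sum_lt_sum_of_nonempty hne h2a
      rw [Finset.sum_const, nsmul_eq_mul] at hsum
      have hcast : (∑ v ∈ Vij, ((Gp v ∩ Ui).card : ℝ)) ≤ (E.card : ℝ) := by
        rw [← Nat.cast_sum]
        exact_mod_cast hElow
      nlinarith
    have hab : (Vij.card : ℝ) < (U.card : ℝ) := by nlinarith
    have habN : Vij.card ≤ U.card := le_of_lt (by exact_mod_cast hab)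
    refine ⟨habN, ?_⟩
    nlinarith
end

section
/- For all integers i ≥ 0 and j ≥ 2, the set Û_{i,j} satisfies |Û_{i,j}| ≤ μ · 2^{−((i−1)(s−1) + j − 2)} · α^{−1}. -/
open Finset

/-- For all integers `i ≥ 0` and `j ≥ 2`, the set `Û_{i,j}`
satisfies `|Û_{i,j}| ≤ μ · 2^{−((i−1)(s−1) + j − 2)} · α⁻¹`, where
`U_i = {u : 2^{i−1} < d_u ≤ 2^i}`, `Γ⁺_i(v) = Γ⁺(v) ∩ U_i`,
`V_{i,j} = {v : 2^{j−1}·α < |Γ⁺_i(v)| ≤ 2^j·α}`,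
`Û_{i,j} = U_i ∩ ⋃_{v ∈ V_{i,j}} Γ⁺(v)`, and `μ = ∑_{v ∈ V} d_v^s`. -/
theorem card_Uhat_le {V : Type*} [Fintype V] [DecidableEq V]
    (G : SimpleGraph V) [DecidableRel G.Adj]
    (s : ℕ) (hs : 1 ≤ s)
    (prec : V → V → Prop) [DecidableRel prec] [IsStrictTotalOrder V prec]
    (hmono : ∀ u v : V, G.degree u < G.degree v → prec u v)
    (α : ℝ) (hα : 1 ≤ α)
    (μ : ℝ) (hμ : μ = ∑ v : V, (G.degree v : ℝ) ^ s)
    (Gp : V → Finset V) (hGp : ∀ v u : V, u ∈ Gp v ↔ G.Adj v u ∧ prec v u)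
    (i j : ℕ) (hj : 2 ≤ j)
    (Ui : Finset V)
    (hUi : ∀ u : V, u ∈ Ui ↔
      (2 : ℝ) ^ ((i : ℝ) - 1) < (G.degree u : ℝ) ∧ (G.degree u : ℝ) ≤ 2 ^ i)
    (Vij : Finset V)
    (hVij : ∀ v : V, v ∈ Vij ↔
      (2 : ℝ) ^ (j - 1) * α < ((Gp v ∩ Ui).card : ℝ) ∧
        ((Gp v ∩ Ui).card : ℝ) ≤ (2 : ℝ) ^ j * α) :
    (((Ui ∩ Vij.biUnion Gp).card : ℝ)) ≤
      μ * (2 : ℝ) ^ (-(((i : ℝ) - 1) * ((s : ℝ) - 1) + (j : ℝ) - 2)) * α⁻¹ := by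
  set Uhat : Finset V := Ui ∩ Vij.biUnion Gp with hUhat
  have hαpos : (0:ℝ) < α := lt_of_lt_of_le one_pos hα
  set A : ℝ := ((i : ℝ) - 1) * ((s : ℝ) - 1) with hA
  -- per-element lower bound on degree power
  have key : ∀ u ∈ Uhat, (2:ℝ) ^ A * ((2:ℝ) ^ (j - 1) * α) ≤ (G.degree u : ℝ) ^ s := by
    intro u hu
    rw [hUhat, Finset.mem_inter, Finset.mem_biUnion] at hu
    obtain ⟨huU, v, hvV, huv⟩ := hu
    have h1 : (2:ℝ) ^ ((i : ℝ) - 1) < (G.degree u : ℝ) := ((hUi u).mp huU).1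
    -- degree v ≤ degree u
    have hvu : G.degree v ≤ G.degree u := by
      by_contra h
      push_neg at h
      have h2 : prec u v := hmono u v h
      have h3 : prec v u := ((hGp v u).mp huv).2
      exact irrefl_of prec u (trans_of prec h2 h3)
    have hcard : (Gp v ∩ Ui).card ≤ G.degree v := by
      refine le_trans (Finset.card_le_card (Finset.inter_subset_left)) ?_
      rw [← SimpleGraph.card_neighborFinset_eq_degree]
      apply Finset.card_le_card
      intro x hx
      rw [SimpleGraph.mem_neighborFinset]
      exact ((hGp v x).mp hx).1
    have h2 : (2:ℝ) ^ (j - 1) * α ≤ (G.degree u : ℝ) := by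
      have := ((hVij v).mp hvV).1
      have hle : ((Gp v ∩ Ui).card : ℝ) ≤ (G.degree u : ℝ) := by
        exact_mod_cast le_trans hcard hvu
      linarith
    have hd0 : (0:ℝ) ≤ (G.degree u : ℝ) := Nat.cast_nonneg _
    have hApow : (2:ℝ) ^ A ≤ (G.degree u : ℝ) ^ (s - 1) := by
      have hcast : ((s - 1 : ℕ) : ℝ) = (s : ℝ) - 1 := by
        rw [Nat.cast_sub hs]; norm_num
      calc (2:ℝ) ^ A = ((2:ℝ) ^ ((i : ℝ) - 1)) ^ ((s - 1 : ℕ) : ℝ) := by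
            rw [← Real.rpow_mul (by norm_num), hcast, hA]
        _ ≤ (G.degree u : ℝ) ^ ((s - 1 : ℕ) : ℝ) :=
            Real.rpow_le_rpow (Real.rpow_nonneg (by norm_num) _) h1.le
              (Nat.cast_nonneg _)
        _ = (G.degree u : ℝ) ^ (s - 1) := Real.rpow_natCast _ _
    calc (2:ℝ) ^ A * ((2:ℝ) ^ (j - 1) * α)
        ≤ (G.degree u : ℝ) ^ (s - 1) * (G.degree u : ℝ) := by
          apply mul_le_mul hApow h2 (by positivity) (by positivity)
      _ = (G.degree u : ℝ) ^ s := by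
          rw [← pow_succ]
          congr 1
          omega
  -- sum bound
  have hsum : (Uhat.card : ℝ) * ((2:ℝ) ^ A * ((2:ℝ) ^ (j - 1) * α)) ≤ μ := by
    have h1 : Uhat.card • ((2:ℝ) ^ A * ((2:ℝ) ^ (j - 1) * α)) ≤
        ∑ u ∈ Uhat, (G.degree u : ℝ) ^ s := Finset.card_nsmul_le_sum _ _ _ key
    rw [nsmul_eq_mul] at h1
    refine le_trans h1 ?_
    rw [hμ]
    exact Finset.sum_le_sum_of_subset_of_nonneg (Finset.subset_univ _)
      (fun v _ _ => by positivity)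
  -- conclude
  have hexp : (2:ℝ) ^ (A + (j : ℝ) - 2) ≤ (2:ℝ) ^ A * (2:ℝ) ^ (j - 1) := by
    have hcast : ((j - 1 : ℕ) : ℝ) = (j : ℝ) - 1 := by
      rw [Nat.cast_sub (by omega)]; norm_num
    calc (2:ℝ) ^ (A + (j : ℝ) - 2) ≤ (2:ℝ) ^ (A + ((j : ℝ) - 1)) :=
          Real.rpow_le_rpow_of_exponent_le one_le_two (by linarith)
      _ = (2:ℝ) ^ A * (2:ℝ) ^ ((j : ℝ) - 1) := Real.rpow_add (by norm_num) _ _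
      _ = (2:ℝ) ^ A * (2:ℝ) ^ (j - 1) := by
          rw [← hcast, Real.rpow_natCast]
  rw [show -(A + (j : ℝ) - 2) = -(A + (j : ℝ) - 2) from rfl,
    Real.rpow_neg (by norm_num : (0:ℝ) ≤ 2), mul_assoc, ← mul_inv, ← div_eq_mul_inv,
    le_div_iff₀ (by positivity)]
  calc (Uhat.card : ℝ) * ((2:ℝ) ^ (A + (j : ℝ) - 2) * α)
      ≤ (Uhat.card : ℝ) * ((2:ℝ) ^ A * ((2:ℝ) ^ (j - 1) * α)) := by
        apply mul_le_mul_of_nonneg_left _ (Nat.cast_nonneg _)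
        rw [← mul_assoc]
        exact mul_le_mul_of_nonneg_right hexp hαpos.le
    _ ≤ μ := hsum
end

section
/- If G has at least one edge and degeneracy at most α, then min{ n·α / μ^{1/s}, n^s·α / μ, n^{1 − 1/s}, n^{s − 1/s} / μ^{1 − 1/s} } ≥ m · μ_{2s−1} / μ^2, where μ_{2s−1} = ∑_{v∈V} d_v^{2s−1}. -/
open Finset

/-- If `G` has at least one edge and degeneracy at most `α`
(every vertex subset `S` spans at most `α·|S|` edges), then
`min{ n·α/μ^{1/s}, n^s·α/μ, n^{1 − 1/s}, n^{s − 1/s}/μ^{1 − 1/s} } ≥ m·μ_{2s−1}/μ^2`,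
where `μ = ∑_{v ∈ V} d_v^s` and `μ_{2s−1} = ∑_{v ∈ V} d_v^{2s−1}`. -/
theorem min_four_ge_edge_moment_ratio {V : Type*} [Fintype V] [DecidableEq V]
    (G : SimpleGraph V) [DecidableRel G.Adj]
    (s : ℕ) (hs : 1 ≤ s)
    (hm : G.edgeFinset.Nonempty)
    (α : ℝ) (hα : 1 ≤ α)
    (hdeg : ∀ S : Finset V,
      ((G.edgeFinset.filter (fun e => ∀ x ∈ e, x ∈ S)).card : ℝ) ≤ α * S.card)
    (μ : ℝ) (hμ : μ = ∑ v : V, (G.degree v : ℝ) ^ s)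
    (μ' : ℝ) (hμ' : μ' = ∑ v : V, (G.degree v : ℝ) ^ (2 * s - 1)) :
    min (min ((Fintype.card V : ℝ) * α / μ ^ ((1 : ℝ) / (s : ℝ)))
             ((Fintype.card V : ℝ) ^ s * α / μ))
        (min ((Fintype.card V : ℝ) ^ ((1 : ℝ) - 1 / (s : ℝ)))
             ((Fintype.card V : ℝ) ^ ((s : ℝ) - 1 / (s : ℝ)) /
                μ ^ ((1 : ℝ) - 1 / (s : ℝ)))) ≥
      (G.edgeFinset.card : ℝ) * μ' / μ ^ 2 := by
  classical
  set n : ℝ := (Fintype.card V : ℝ) with hn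
  set m : ℝ := (G.edgeFinset.card : ℝ) with hmdef
  have hS0 : (s : ℝ) ≠ 0 := by positivity
  -- a vertex of positive degree
  obtain ⟨e, he⟩ := hm
  rw [SimpleGraph.mem_edgeFinset] at he
  induction e using Sym2.ind with
  | _ u w =>
  rw [SimpleGraph.mem_edgeSet] at he
  have hdu : 0 < G.degree u := (G.degree_pos_iff_exists_adj u).2 ⟨w, he⟩
  have hNpos : 0 < n := by
    rw [hn]
    have := Fintype.card_pos_iff.2 ⟨u⟩
    exact_mod_cast this
  have hdN : ∀ v : V, (G.degree v : ℝ) ≤ n := fun v => by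
    rw [hn]
    exact_mod_cast (G.degree_lt_card_verts v).le
  have hμpos : 0 < μ := by
    rw [hμ]
    have h1 : (1:ℝ) ≤ (G.degree u : ℝ) ^ s := one_le_pow₀ (by exact_mod_cast hdu)
    have := Finset.single_le_sum (f := fun v => (G.degree v : ℝ) ^ s)
      (fun i _ => by positivity) (Finset.mem_univ u)
    linarith
  have hμ'nonneg : 0 ≤ μ' := by
    rw [hμ']; exact Finset.sum_nonneg fun i _ => by positivity
  have hm0 : 0 ≤ m := by positivity
  -- m ≤ α n
  have hmαN : m ≤ α * n := by
    have h := hdeg Finset.univ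
    rw [Finset.filter_true_of_mem (fun e _ x _ => Finset.mem_univ x),
      Finset.card_univ] at h
    rw [hmdef, hn]
    exact h
  -- P and Q
  set P : ℝ := μ ^ ((1:ℝ)/(s:ℝ)) with hP
  set Q : ℝ := n ^ ((1:ℝ)/(s:ℝ)) with hQ
  have hPpos : 0 < P := Real.rpow_pos_of_pos hμpos _
  have hQpos : 0 < Q := Real.rpow_pos_of_pos hNpos _
  have hPs : P ^ s = μ := by
    rw [hP, ← Real.rpow_natCast (μ ^ ((1:ℝ)/(s:ℝ))) s, ← Real.rpow_mul hμpos.le,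
      one_div_mul_cancel hS0, Real.rpow_one]
  have hQs : Q ^ s = n := by
    rw [hQ, ← Real.rpow_natCast (n ^ ((1:ℝ)/(s:ℝ))) s, ← Real.rpow_mul hNpos.le,
      one_div_mul_cancel hS0, Real.rpow_one]
  -- each degree power is at most μ
  have hdμ : ∀ v : V, (G.degree v : ℝ) ^ s ≤ μ := fun v => by
    rw [hμ]
    exact Finset.single_le_sum (f := fun v => (G.degree v : ℝ) ^ s)
      (fun i _ => by positivity) (Finset.mem_univ v)
  have hdP : ∀ v : V, (G.degree v : ℝ) ≤ P := fun v => by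
    have := hdμ v
    rw [← hPs] at this
    exact (pow_le_pow_iff_left₀ (by positivity) hPpos.le (by omega)).1 this
  -- key1 : μ' * P ≤ μ * μ
  have key1 : μ' * P ≤ μ * μ := by
    rw [hμ', Finset.sum_mul]
    have step : ∀ v ∈ Finset.univ,
        (G.degree v : ℝ) ^ (2 * s - 1) * P ≤ (G.degree v : ℝ) ^ s * μ := by
      intro v _
      have h2s : 2 * s - 1 = s + (s - 1) := by omega
      rw [h2s, pow_add]
      have h1 : (G.degree v : ℝ) ^ (s-1) ≤ P ^ (s-1) :=
        pow_le_pow_left₀ (by positivity) (hdP v) _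
      have h2 : P ^ (s-1) * P = μ := by
        rw [← pow_succ, ← hPs]; congr 1; omega
      calc (G.degree v : ℝ) ^ s * (G.degree v : ℝ) ^ (s-1) * P
          ≤ (G.degree v : ℝ) ^ s * (P ^ (s-1) * P) := by
            rw [mul_assoc]
            exact mul_le_mul_of_nonneg_left
              (mul_le_mul_of_nonneg_right h1 hPpos.le) (by positivity)
        _ = (G.degree v : ℝ) ^ s * μ := by rw [h2]
    calc ∑ v : V, (G.degree v : ℝ) ^ (2 * s - 1) * P
        ≤ ∑ v : V, (G.degree v : ℝ) ^ s * μ := Finset.sum_le_sum step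
      _ = μ * μ := by rw [← Finset.sum_mul, ← hμ]
  -- key2 : μ' ≤ n^(s-1) * μ
  have key2 : μ' ≤ n ^ (s-1) * μ := by
    rw [hμ', hμ, Finset.mul_sum]
    apply Finset.sum_le_sum
    intro v _
    have h2s : 2 * s - 1 = (s - 1) + s := by omega
    rw [h2s, pow_add]
    exact mul_le_mul_of_nonneg_right
      (pow_le_pow_left₀ (by positivity) (hdN v) _) (by positivity)
  have hnss : n ^ (s-1) * n = n ^ s := by
    rw [← pow_succ]; congr 1; omega
  -- key3 : m * Q ≤ n * P
  have key3 : m * Q ≤ n * P := by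
    have hsum : (∑ v : V, (G.degree v : ℝ)) = 2 * m := by
      rw [hmdef]
      exact_mod_cast G.sum_degrees_eq_twice_card_edges
    have hpm := pow_sum_div_card_le_sum_pow
      (s := Finset.univ) (f := fun v : V => (G.degree v : ℝ))
      (fun i _ => by positivity) (s - 1)
    rw [Nat.sub_add_cancel hs] at hpm
    have hms : m ^ s ≤ n ^ (s-1) * μ := by
      have h2m : m ^ s ≤ (2*m) ^ s := pow_le_pow_left₀ hm0 (by linarith) _
      rw [← hsum] at h2m
      have hcard : ((Finset.univ : Finset V).card : ℝ) = n := by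
        rw [hn, Finset.card_univ]
      rw [hcard, div_le_iff₀ (by positivity), ← hμ] at hpm
      calc m ^ s ≤ (∑ v : V, (G.degree v : ℝ)) ^ s := h2m
        _ ≤ μ * n ^ (s-1) := hpm
        _ = n ^ (s-1) * μ := by ring
    refine (pow_le_pow_iff_left₀ (n := s) (by positivity) (by positivity) (by omega)).1 ?_
    rw [mul_pow, mul_pow, hPs, hQs]
    calc m ^ s * n ≤ n ^ (s-1) * μ * n := mul_le_mul_of_nonneg_right hms hNpos.le
      _ = n ^ s * μ := by rw [← hnss]; ring
  have hμ2 : (0:ℝ) < μ ^ 2 := by positivity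
  -- rewrite the rpow expressions
  have hexp1 : (1:ℝ) - 1/(s:ℝ) + 1/(s:ℝ) = 1 := by ring
  have hexp2 : (s:ℝ) - 1/(s:ℝ) + 1/(s:ℝ) = (s:ℝ) := by ring
  have hNQ : n ^ ((1:ℝ) - 1/(s:ℝ)) = n / Q := by
    rw [eq_div_iff hQpos.ne', hQ, ← Real.rpow_add hNpos, hexp1, Real.rpow_one]
  have hμP : μ ^ ((1:ℝ) - 1/(s:ℝ)) = μ / P := by
    rw [eq_div_iff hPpos.ne', hP, ← Real.rpow_add hμpos, hexp1, Real.rpow_one]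
  have hNsQ : n ^ ((s:ℝ) - 1/(s:ℝ)) = n ^ s / Q := by
    rw [eq_div_iff hQpos.ne', hQ, ← Real.rpow_add hNpos, hexp2, Real.rpow_natCast]
  clear_value n m P Q
  rw [ge_iff_le]
  refine le_min (le_min ?_ ?_) (le_min ?_ ?_)
  · -- A : m μ' / μ² ≤ n α / P
    rw [div_le_div_iff₀ hμ2 hPpos]
    calc m * μ' * P = m * (μ' * P) := by ring
      _ ≤ (α * n) * (μ * μ) :=
          mul_le_mul hmαN key1 (by positivity) (by positivity)
      _ = n * α * μ ^ 2 := by ring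
  · -- B : m μ' / μ² ≤ n^s α / μ
    rw [div_le_div_iff₀ hμ2 hμpos]
    have h1 : m * μ' ≤ α * (n ^ s * μ) := by
      calc m * μ' ≤ α * n * (n ^ (s-1) * μ) :=
            mul_le_mul hmαN key2 hμ'nonneg (by positivity)
        _ = α * (n ^ s * μ) := by rw [← hnss]; ring
    calc m * μ' * μ ≤ (α * (n ^ s * μ)) * μ :=
          mul_le_mul_of_nonneg_right h1 hμpos.le
      _ = n ^ s * α * μ ^ 2 := by ring
  · -- C : m μ' / μ² ≤ n^{1-1/s}
    rw [hNQ, div_le_div_iff₀ hμ2 hQpos]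
    calc m * μ' * Q = (m * Q) * μ' := by ring
      _ ≤ (n * P) * μ' := mul_le_mul_of_nonneg_right key3 hμ'nonneg
      _ = n * (μ' * P) := by ring
      _ ≤ n * (μ * μ) := mul_le_mul_of_nonneg_left key1 hNpos.le
      _ = n * μ ^ 2 := by ring
  · -- D : m μ' / μ² ≤ n^{s-1/s} / μ^{1-1/s}
    rw [hNsQ, hμP]
    have hrw : n ^ s / Q / (μ / P) = (n ^ s * P) / (Q * μ) := by
      field_simp
    rw [hrw, div_le_div_iff₀ hμ2 (by positivity)]
    calc m * μ' * (Q * μ) = (m * Q) * (μ' * μ) := by ring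
      _ ≤ (n * P) * (n ^ (s-1) * μ * μ) :=
          mul_le_mul key3 (mul_le_mul_of_nonneg_right key2 hμpos.le)
            (by positivity) (by positivity)
      _ = n ^ s * P * μ ^ 2 := by rw [← hnss]; ring
end

section
/- Let 0 < ε ≤ 1, let θ = 2α/ε, and let L = {v ∈ V : d_v ≤ θ}. If G has degeneracy at most α, then ∑_{v∈L} d⁺_v ≥ (1 − ε)·m. -/
open Finset

private def minOf {V : Type*} (prec : V → V → Prop) [DecidableRel prec]
    [IsStrictTotalOrder V prec] : Sym2 V → V :=
  Sym2.lift ⟨fun u v => if prec u v then u else v, by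
    intro u v
    rcases trichotomous_of prec u v with h | h | h
    · simp [h, asymm h]
    · simp [h]
    · simp [h, asymm h]⟩

private lemma minOf_mk {V : Type*} (prec : V → V → Prop) [DecidableRel prec]
    [IsStrictTotalOrder V prec] (a b : V) :
    minOf prec s(a, b) = if prec a b then a else b := rfl

private lemma fiber_eq {V : Type*} [Fintype V] [DecidableEq V]
    (G : SimpleGraph V) [DecidableRel G.Adj]
    (prec : V → V → Prop) [DecidableRel prec] [IsStrictTotalOrder V prec] (v : V) :
    G.edgeFinset.filter (fun e => minOf prec e = v) =
      ((G.neighborFinset v).filter (fun u => prec v u)).image (fun u => s(v, u)) := by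
  ext e
  induction e using Sym2.ind with
  | _ a b =>
    simp only [mem_filter, SimpleGraph.mem_edgeFinset, SimpleGraph.mem_edgeSet, mem_image,
      SimpleGraph.mem_neighborFinset, minOf_mk]
    constructor
    · rintro ⟨hab, hmin⟩
      by_cases h : prec a b
      · simp only [h, if_true] at hmin
        subst hmin
        exact ⟨b, ⟨hab, h⟩, rfl⟩
      · simp only [h, if_false] at hmin
        subst hmin
        have hne : a ≠ b := G.ne_of_adj hab
        rcases trichotomous_of prec a b with h' | h' | h'
        · exact absurd h' h
        · exact absurd h' hne
        · exact ⟨a, ⟨hab.symm, h'⟩, Sym2.eq_swap⟩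
    · rintro ⟨u, ⟨hadj, hprec⟩, he⟩
      rcases Sym2.eq_iff.mp he with ⟨h1, h2⟩ | ⟨h1, h2⟩
      · subst h1; subst h2
        simp [hadj, hprec]
      · subst h1; subst h2
        simp [hadj.symm, asymm hprec]

/-- Let `0 < ε ≤ 1`, `θ = 2α/ε`, and `L = {v ∈ V : d_v ≤ θ}`.
If `G` has degeneracy at most `α` (every vertex subset `S` spans at most
`α·|S|` edges), then `∑_{v ∈ L} d⁺_v ≥ (1 − ε)·m`, where
`d⁺_v = |{u ∈ Γ(v) : v ≺ u}|` and `m = |E(G)|`. -/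
theorem sum_low_up_degree_ge {V : Type*} [Fintype V] [DecidableEq V]
    (G : SimpleGraph V) [DecidableRel G.Adj]
    (prec : V → V → Prop) [DecidableRel prec] [IsStrictTotalOrder V prec]
    (hmono : ∀ u v : V, G.degree u < G.degree v → prec u v)
    (α : ℝ) (hα : 1 ≤ α)
    (hdeg : ∀ S : Finset V,
      ((G.edgeFinset.filter (fun e => ∀ x ∈ e, x ∈ S)).card : ℝ) ≤ α * S.card)
    (ε : ℝ) (hε0 : 0 < ε) (hε1 : ε ≤ 1)
    (L : Finset V) (hL : ∀ v : V, v ∈ L ↔ (G.degree v : ℝ) ≤ 2 * α / ε) :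
    ∑ v ∈ L, (((G.neighborFinset v).filter (fun u => prec v u)).card : ℝ) ≥
      (1 - ε) * (G.edgeFinset.card : ℝ) := by
  classical
  set S : Finset V := univ \ L with hSdef
  set f : Sym2 V → V := minOf prec with hf
  set fib : V → Finset (Sym2 V) := fun v => G.edgeFinset.filter (fun e => f e = v) with hfib
  have hfibcard : ∀ v : V, (fib v).card = ((G.neighborFinset v).filter (fun u => prec v u)).card := by
    intro v
    rw [hfib]
    simp only
    rw [fiber_eq G prec v]
    apply card_image_of_injOn
    intro u1 _ u2 _ h
    exact Sym2.congr_right.mp h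
  have htotal : G.edgeFinset.card = ∑ v ∈ (univ : Finset V), (fib v).card :=
    card_eq_sum_card_fiberwise (fun e _ => mem_univ _)
  have hsplit : ∑ v ∈ S, (fib v).card + ∑ v ∈ L, (fib v).card
      = ∑ v ∈ (univ : Finset V), (fib v).card := sum_sdiff (subset_univ L)
  -- each vertex of S has large degree
  have hSbig : ∀ v ∈ S, 2 * α / ε < (G.degree v : ℝ) := by
    intro v hv
    have := (mem_sdiff.mp hv).2
    rw [hL v] at this
    linarith [lt_of_not_ge this]
  -- fibers over S only contain edges inside S
  have hsub : ∀ v ∈ S, fib v ⊆ G.edgeFinset.filter (fun e => ∀ x ∈ e, x ∈ S) := by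
    intro v hv e he
    rw [hfib] at he
    simp only at he
    rw [fiber_eq G prec v] at he
    rcases mem_image.mp he with ⟨u, hu, hue⟩
    rcases mem_filter.mp hu with ⟨hadj, hprec⟩
    rw [SimpleGraph.mem_neighborFinset] at hadj
    have hdu : (G.degree v : ℝ) ≤ G.degree u := by
      by_contra hlt
      push_neg at hlt
      have : G.degree u < G.degree v := by exact_mod_cast hlt
      exact asymm (hmono u v this) hprec
    have huS : u ∈ S := by
      rw [hSdef, mem_sdiff]
      refine ⟨mem_univ _, ?_⟩
      rw [hL u]
      push_neg
      linarith [hSbig v hv]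
    rw [← hue]
    rw [mem_filter]
    refine ⟨SimpleGraph.mem_edgeFinset.mpr hadj, ?_⟩
    intro x hx
    rcases Sym2.mem_iff.mp hx with h | h
    · rw [h]; exact hv
    · rw [h]; exact huS
  -- sum of fiber cards over S is at most number of edges inside S
  have hbound : ∑ v ∈ S, (fib v).card ≤ (G.edgeFinset.filter (fun e => ∀ x ∈ e, x ∈ S)).card := by
    have hdisj : ∀ x ∈ S, ∀ y ∈ S, x ≠ y → Disjoint (fib x) (fib y) := by
      intro x _ y _ hxy
      rw [disjoint_left]
      intro e hex hey
      rw [hfib, mem_filter] at hex hey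
      exact hxy (hex.2.symm.trans hey.2)
    rw [← card_biUnion hdisj]
    apply card_le_card
    exact biUnion_subset.mpr hsub
  -- size of S
  have hm2 : (∑ v ∈ (univ : Finset V), (G.degree v : ℝ)) = 2 * G.edgeFinset.card := by
    have h := G.sum_degrees_eq_twice_card_edges
    rw [← Nat.cast_sum, h]
    push_cast
    ring
  have hScard : (S.card : ℝ) * (2 * α / ε) ≤ 2 * G.edgeFinset.card := by
    calc (S.card : ℝ) * (2 * α / ε) = ∑ _v ∈ S, (2 * α / ε) := by
          rw [sum_const, nsmul_eq_mul]
      _ ≤ ∑ v ∈ S, (G.degree v : ℝ) := sum_le_sum (fun v hv => le_of_lt (hSbig v hv))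
      _ ≤ ∑ v ∈ (univ : Finset V), (G.degree v : ℝ) :=
          sum_le_sum_of_subset_of_nonneg (subset_univ S) (fun v _ _ => by positivity)
      _ = 2 * G.edgeFinset.card := hm2
  have hαpos : (0:ℝ) < α := lt_of_lt_of_le one_pos hα
  have hkey : α * S.card ≤ ε * G.edgeFinset.card := by
    have h' : (S.card : ℝ) * (2 * α) ≤ 2 * G.edgeFinset.card * ε := by
      rw [div_eq_mul_inv, ← mul_assoc] at hScard
      calc (S.card : ℝ) * (2 * α) = (S.card : ℝ) * (2 * α) * ε⁻¹ * ε := by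
            field_simp
        _ ≤ 2 * G.edgeFinset.card * ε := by
            apply mul_le_mul_of_nonneg_right hScard (le_of_lt hε0)
    nlinarith
  -- wrap up
  have hreal : ∑ v ∈ L, (((G.neighborFinset v).filter (fun u => prec v u)).card : ℝ)
      = (G.edgeFinset.card : ℝ) - ∑ v ∈ S, ((fib v).card : ℝ) := by
    have : ∑ v ∈ L, (((G.neighborFinset v).filter (fun u => prec v u)).card : ℝ)
        = ∑ v ∈ L, ((fib v).card : ℝ) := by
      apply sum_congr rfl
      intro v _
      rw [hfibcard v]
    rw [this]
    have hnat : ∑ v ∈ S, (fib v).card + ∑ v ∈ L, (fib v).card = G.edgeFinset.card := by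
      rw [hsplit, ← htotal]
    have := congrArg (fun n : ℕ => (n : ℝ)) hnat
    push_cast at this
    linarith
  rw [hreal]
  have hEcard : (∑ v ∈ S, ((fib v).card : ℝ)) ≤ ε * G.edgeFinset.card := by
    calc (∑ v ∈ S, ((fib v).card : ℝ))
        = ((∑ v ∈ S, (fib v).card : ℕ) : ℝ) := by push_cast; ring
      _ ≤ ((G.edgeFinset.filter (fun e => ∀ x ∈ e, x ∈ S)).card : ℝ) := by exact_mod_cast hbound
      _ ≤ α * S.card := hdeg S
      _ ≤ ε * G.edgeFinset.card := hkey
  linarith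
end
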